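/- arXiv:1011.3251 — 3 statements merged into one kernel-verified Lean document; each statement's English description precedes it below -/
import Mathlib

section
/- Let a, w : ℝ³ → ℝ³ be C¹ vector fields and set v = a × w (pointwise cross product). Assume ⟨a(x), rot v(x)⟩ = 0 for all x ∈ ℝ³. Then every solution x : I → ℝ³ of ẋ = v(x) satisfies the constraint ⟨a(x(t)), ẋ(t)⟩ = 0 and the second-order equation ẍ(t) = ∇(½‖v‖²)(x(t)) + ⟨rot v(x(t)), w(x(t))⟩ · a(x(t)) for all t ∈ I. -/
open Real Set

noncomputable section

/-- Partial derivative in the `k`-th coordinate direction. -/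
def pd (k : Fin 3) (f : (Fin 3 → ℝ) → ℝ) (x : Fin 3 → ℝ) : ℝ :=
  fderiv ℝ f x (Pi.single k 1)

/-- Gradient. -/
def grad (f : (Fin 3 → ℝ) → ℝ) (x : Fin 3 → ℝ) : Fin 3 → ℝ := fun k => pd k f x

/-- Euclidean inner product on ℝ³. -/
def dot (a b : Fin 3 → ℝ) : ℝ := ∑ i, a i * b i

/-- Squared Euclidean norm on ℝ³. -/
def nsq (a : Fin 3 → ℝ) : ℝ := ∑ i, a i ^ 2

/-- Cross product on ℝ³. -/
def cross (a b : Fin 3 → ℝ) : Fin 3 → ℝ :=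
  ![a 1 * b 2 - a 2 * b 1, a 2 * b 0 - a 0 * b 2, a 0 * b 1 - a 1 * b 0]

/-- Curl of a vector field on ℝ³. -/
def rot (u : (Fin 3 → ℝ) → (Fin 3 → ℝ)) (x : Fin 3 → ℝ) : Fin 3 → ℝ :=
  ![pd 1 (fun y => u y 2) x - pd 2 (fun y => u y 1) x,
    pd 2 (fun y => u y 0) x - pd 0 (fun y => u y 2) x,
    pd 0 (fun y => u y 1) x - pd 1 (fun y => u y 0) x]

/-!
Along a solution, `d/dt v(x) = Dv(x) v(x)` is the convective derivative `(v·∇)v`, which Lamb's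
identity rewrites as `∇(½‖v‖²) + rot v × v`. For `v = a × w` the triple product expansion gives
`rot v × (a × w) = ⟨rot v, w⟩ a - ⟨a, rot v⟩ w`, and the compatibility condition kills the second
term. The constraint holds because `a × w` is orthogonal to `a`.
-/

open Matrix

theorem cross_eq_crossProduct (a b : Fin 3 → ℝ) : cross a b = a ⨯₃ b := rfl

theorem DifferentiableAt.crossProduct {a w : (Fin 3 → ℝ) → (Fin 3 → ℝ)} {p : Fin 3 → ℝ}
    (ha : DifferentiableAt ℝ a p) (hw : DifferentiableAt ℝ w p) :
    DifferentiableAt ℝ (fun y => a y ⨯₃ w y) p := by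
  refine differentiableAt_pi.2 fun k => ?_
  fin_cases k <;>
  · simp only [Fin.zero_eta, Fin.mk_one, Fin.reduceFinMk, Fin.isValue, cross_apply,
      Nat.succ_eq_add_one, Nat.reduceAdd, cons_val_zero, cons_val_one, cons_val]
    fun_prop

section

variable {v : (Fin 3 → ℝ) → (Fin 3 → ℝ)} {p : Fin 3 → ℝ}

theorem pd_apply_eq_fderiv_apply (hv : DifferentiableAt ℝ v p) (j k : Fin 3) :
    pd j (fun y => v y k) p = fderiv ℝ v p (Pi.single j 1) k := by
  rw [pd, (hasFDerivAt_pi'.1 hv.hasFDerivAt k).fderiv]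
  rfl

theorem grad_half_nsq (hv : DifferentiableAt ℝ v p) :
    grad (fun y => 1 / 2 * nsq (v y)) p = fun k => v p ⬝ᵥ fderiv ℝ v p (Pi.single k 1) := by
  have hsum := HasFDerivAt.fun_sum (u := Finset.univ) fun i _ =>
    (hasFDerivAt_pi'.1 hv.hasFDerivAt i).pow 2
  ext k
  simp only [grad, pd, nsq]
  rw [(hsum.const_mul (1 / 2 : ℝ)).fderiv]
  simp [dotProduct, Finset.mul_sum, mul_assoc]

/-- Lamb's identity `(v·∇)v = ∇(½‖v‖²) + rot v × v`. -/
theorem fderiv_apply_self_eq_grad_add_rot_cross (hv : DifferentiableAt ℝ v p) :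
    fderiv ℝ v p (v p) = grad (fun y => 1 / 2 * nsq (v y)) p + rot v p ⨯₃ v p := by
  have hrot : rot v p = ![fderiv ℝ v p (Pi.single 1 1) 2 - fderiv ℝ v p (Pi.single 2 1) 1,
      fderiv ℝ v p (Pi.single 2 1) 0 - fderiv ℝ v p (Pi.single 0 1) 2,
      fderiv ℝ v p (Pi.single 0 1) 1 - fderiv ℝ v p (Pi.single 1 1) 0] := by
    simp only [rot, pd_apply_eq_fderiv_apply hv]
  rw [grad_half_nsq hv, hrot]
  conv_lhs => rw [pi_eq_sum_univ' (v p), map_sum]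
  ext k
  fin_cases k <;>
  · simp only [map_smul, Fin.zero_eta, Fin.mk_one, Fin.reduceFinMk, Fin.isValue,
      Finset.sum_apply, Pi.smul_apply, smul_eq_mul, Fin.sum_univ_three, dotProduct,
      Nat.succ_eq_add_one, Nat.reduceAdd, cross_apply, cons_val_one, cons_val_zero, cons_val,
      Pi.add_apply]
    ring

end

/-- Equations (E1): for the Cartesian vector field `v = a × w` with
`⟨a, rot v⟩ = 0`, solutions of `ẋ = v(x)` satisfy the constraint `⟨a(x), ẋ⟩ = 0`
and the second-order equation `ẍ = ∇(½‖v‖²)(x) + ⟨rot v(x), w(x)⟩ a(x)`. -/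
theorem cartesian_particle_R3
    (a w : (Fin 3 → ℝ) → (Fin 3 → ℝ))
    (ha : ContDiff ℝ 1 a) (hw : ContDiff ℝ 1 w)
    (v : (Fin 3 → ℝ) → (Fin 3 → ℝ))
    (hv : ∀ x, v x = cross (a x) (w x))
    (hcomp : ∀ x, dot (a x) (rot v x) = 0)
    (t₁ t₂ : ℝ) (x : ℝ → (Fin 3 → ℝ))
    (hx : ∀ t ∈ Ioo t₁ t₂, HasDerivAt x (v (x t)) t) :
    ∀ t ∈ Ioo t₁ t₂,
      dot (a (x t)) (v (x t)) = 0 ∧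
      HasDerivAt (fun s => v (x s))
        (fun k => grad (fun y => (1 / 2) * nsq (v y)) (x t) k
          + dot (rot v (x t)) (w (x t)) * a (x t) k) t := by
  intro t ht
  simp only [cross_eq_crossProduct] at hv
  have hv_diff : DifferentiableAt ℝ v (x t) := by
    rw [show v = fun y => a y ⨯₃ w y from funext hv]
    exact (ha.differentiable one_ne_zero _).crossProduct (hw.differentiable one_ne_zero _)
  refine ⟨by rw [hv]; exact dot_self_cross _ _, ?_⟩
  refine (hv_diff.hasFDerivAt.comp_hasDerivAt t (hx t ht)).congr_deriv ?_
  rw [fderiv_apply_self_eq_grad_add_rot_cross hv_diff, hv (x t), cross_cross_eq_smul_sub_smul',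
    show a (x t) ⬝ᵥ rot v (x t) = 0 from hcomp (x t), zero_smul, sub_zero]
  rfl
end
end

section
/- Let I₁, I₂ > 0 and h ∈ ℝ. Let μ₁, μ₂ : ℝ³ → ℝ be C¹ functions of γ = (γ₁, γ₂, γ₃) satisfying the linear partial differential equation γ₃ (∂_{γ₂} μ₁ − ∂_{γ₁} μ₂) − γ₂ ∂_{γ₃} μ₁ + γ₁ ∂_{γ₃} μ₂ = 0 on ℝ³, and set U(γ) = (I₁ μ₁(γ)² + I₂ μ₂(γ)²)/(2 I₁ I₂) − h. Suppose (ω₁, ω₂, γ) : I → ℝ² × ℝ³ is a solution of the Suslov system I₁ ω̇₁ = γ₃ ∂_{γ₂}U(γ) − γ₂ ∂_{γ₃}U(γ), I₂ ω̇₂ = γ₁ ∂_{γ₃}U(γ) − γ₃ ∂_{γ₁}U(γ), γ̇₁ = −γ₃ ω₂, γ̇₂ = γ₃ ω₁, γ̇₃ = γ₁ ω₂ − γ₂ ω₁ on an open interval I, and that at some t₀ ∈ I: I₁ ω₁(t₀) = μ₂(γ(t₀)) and I₂ ω₂(t₀) = −μ₁(γ(t₀)). Then I₁ ω₁(t) =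 μ₂(γ(t)) and I₂ ω₂(t) = −μ₁(γ(t)) for all t ∈ I; i.e. the relations I₁ω₁ − μ₂ = 0 and I₂ω₂ + μ₁ = 0 are invariant relations (first integrals) of the Suslov system. -/
/-! Write `X = γ × e₁` and `Y = γ × e₂` for the infinitesimal rotations, so that the Poisson
equations read `γ̇ = ω₁ X + ω₂ Y` and the PDE reads `X μ₁ + Y μ₂ = 0`. Along a solution put
`F₁ = I₁ω₁ − μ₂(γ)` and `F₂ = I₂ω₂ + μ₁(γ)`. Differentiating, and substituting
`ω₁ = (F₁ + μ₂)/I₁`, `ω₂ = (F₂ − μ₁)/I₂`, everything not linear in `F` collects into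
`μ₁/I₂ · (X μ₁ + Y μ₂)` and `μ₂/I₁ · (X μ₁ + Y μ₂)`, which vanish. So `F` solves a linear ODE
`F' = A(t) F` whose coefficients are continuous because `μ₁, μ₂` are `C¹`, and `F(t₀) = 0`
forces `F ≡ 0` by uniqueness of solutions. -/

open Real Set

noncomputable section

theorem linear_ODE_eqOn_zero_of_mem_Ioo {E : Type*} [NormedAddCommGroup E] [NormedSpace ℝ E]
    {A : ℝ → E →L[ℝ] E} {f : ℝ → E} {t₁ t₂ t₀ : ℝ} (hA : ContinuousOn A (Ioo t₁ t₂))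
    (hf : ∀ t ∈ Ioo t₁ t₂, HasDerivAt f (A t (f t)) t) (ht₀ : t₀ ∈ Ioo t₁ t₂) (hf₀ : f t₀ = 0) :
    EqOn f 0 (Ioo t₁ t₂) := by
  intro t ht
  obtain ⟨a, ha₁, ha⟩ := exists_between (lt_min ht.1 ht₀.1)
  obtain ⟨b, hb, hb₂⟩ := exists_between (max_lt ht.2 ht₀.2)
  have hab : Icc a b ⊆ Ioo t₁ t₂ := Icc_subset_Ioo ha₁ hb₂
  have mem {u : ℝ} (h : min t t₀ ≤ u) (h' : u ≤ max t t₀) : u ∈ Ioo a b :=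
    ⟨ha.trans_le h, h'.trans_lt hb⟩
  -- the largest `‖A s‖` over the compact `[a, b]` is a uniform Lipschitz constant there
  obtain ⟨s, -, hs⟩ := isCompact_Icc.exists_isMaxOn
    (nonempty_Icc.2 (ha.trans_le min_le_max |>.trans hb).le)
    (continuous_nnnorm.comp_continuousOn (hA.mono hab))
  exact ODE_solution_unique_of_mem_Ioo (v := fun u => A u) (s := fun _ => univ) (K := ‖A s‖₊)
    (fun u hu => ((A u).lipschitz.weaken (hs (Ioo_subset_Icc_self hu))).lipschitzOnWith)
    (mem (min_le_right _ _) (le_max_right _ _))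
    (fun u hu => ⟨hf u (hab (Ioo_subset_Icc_self hu)), trivial⟩)
    (fun u _ => ⟨by simp, trivial⟩) hf₀
    (mem (min_le_left _ _) (le_max_left _ _))

theorem hasDerivAt_pi_three {γ : ℝ → Fin 3 → ℝ} {a b c t : ℝ}
    (h₀ : HasDerivAt (fun s => γ s 0) a t) (h₁ : HasDerivAt (fun s => γ s 1) b t)
    (h₂ : HasDerivAt (fun s => γ s 2) c t) : HasDerivAt γ ![a, b, c] t := by
  rw [hasDerivAt_pi]
  intro i
  fin_cases i <;> assumption

theorem hasDerivAt_comp_sum_pd {μ : (Fin 3 → ℝ) → ℝ} {γ : ℝ → Fin 3 → ℝ} {γ' : Fin 3 → ℝ}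
    {t : ℝ} (hμ : DifferentiableAt ℝ μ (γ t)) (hγ : HasDerivAt γ γ' t) :
    HasDerivAt (fun s => μ (γ s)) (∑ i, γ' i * pd i μ (γ t)) t := by
  refine (hμ.hasFDerivAt.comp_hasDerivAt t hγ).congr_deriv ?_
  conv_lhs => rw [← Finset.univ_sum_single γ']
  rw [map_sum]
  refine Finset.sum_congr rfl fun i _ => ?_
  rw [pd, ← smul_eq_mul, ← map_smul, ← Pi.single_smul', smul_eq_mul, mul_one]

theorem continuous_pd {μ : (Fin 3 → ℝ) → ℝ} (hμ : ContDiff ℝ 1 μ) (k : Fin 3) :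
    Continuous (pd k μ) :=
  (hμ.continuous_fderiv one_ne_zero).clm_apply continuous_const

/-- The derivative along the rotation field `γ × e₁ = (0, γ₃, -γ₂)`. -/
def rotDer₁ (μ : (Fin 3 → ℝ) → ℝ) (x : Fin 3 → ℝ) : ℝ := x 2 * pd 1 μ x - x 1 * pd 2 μ x

/-- The derivative along the rotation field `γ × e₂ = (-γ₃, 0, γ₁)`. -/
def rotDer₂ (μ : (Fin 3 → ℝ) → ℝ) (x : Fin 3 → ℝ) : ℝ := x 0 * pd 2 μ x - x 2 * pd 0 μ x

theorem continuous_rotDer₁ {μ : (Fin 3 → ℝ) → ℝ} (hμ : ContDiff ℝ 1 μ) :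
    Continuous (rotDer₁ μ) :=
  ((continuous_apply 2).mul (continuous_pd hμ 1)).sub
    ((continuous_apply 1).mul (continuous_pd hμ 2))

theorem continuous_rotDer₂ {μ : (Fin 3 → ℝ) → ℝ} (hμ : ContDiff ℝ 1 μ) :
    Continuous (rotDer₂ μ) :=
  ((continuous_apply 0).mul (continuous_pd hμ 2)).sub
    ((continuous_apply 2).mul (continuous_pd hμ 0))

theorem hasDerivAt_comp_of_poisson {μ : (Fin 3 → ℝ) → ℝ} {γ : ℝ → Fin 3 → ℝ} {t w₁ w₂ : ℝ}
    (hμ : DifferentiableAt ℝ μ (γ t))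
    (hγ : HasDerivAt γ ![-(γ t 2 * w₂), γ t 2 * w₁, γ t 0 * w₂ - γ t 1 * w₁] t) :
    HasDerivAt (fun s => μ (γ s)) (w₁ * rotDer₁ μ (γ t) + w₂ * rotDer₂ μ (γ t)) t := by
  refine (hasDerivAt_comp_sum_pd hμ hγ).congr_deriv ?_
  simp only [Fin.sum_univ_three, rotDer₁, rotDer₂, Matrix.cons_val_zero, Matrix.cons_val_one,
    Matrix.cons_val]
  ring

theorem pd_potential {I₁ I₂ h : ℝ} (hI₁ : I₁ ≠ 0) (hI₂ : I₂ ≠ 0) {μ₁ μ₂ : (Fin 3 → ℝ) → ℝ}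
    {x : Fin 3 → ℝ} (hμ₁ : DifferentiableAt ℝ μ₁ x) (hμ₂ : DifferentiableAt ℝ μ₂ x)
    (k : Fin 3) :
    pd k (fun y => (I₁ * μ₁ y ^ 2 + I₂ * μ₂ y ^ 2) / (2 * I₁ * I₂) - h) x =
      μ₁ x * pd k μ₁ x / I₂ + μ₂ x * pd k μ₂ x / I₁ := by
  have hμ₁' := hμ₁.hasFDerivAt
  have hμ₂' := hμ₂.hasFDerivAt
  have hU : HasFDerivAt
      (fun y => (2 * I₁ * I₂)⁻¹ * (I₁ * (μ₁ y * μ₁ y) + I₂ * (μ₂ y * μ₂ y)) - h) _ x :=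
    ((((hμ₁'.mul hμ₁').const_mul I₁).add ((hμ₂'.mul hμ₂').const_mul I₂)).const_mul _).sub_const h
  simp_rw [div_eq_inv_mul, sq]
  rw [pd, hU.fderiv]
  simp only [pd, smul_apply, add_apply, smul_eq_mul]
  field_simp
  ring

theorem rotDer₁_potential {I₁ I₂ h : ℝ} (hI₁ : I₁ ≠ 0) (hI₂ : I₂ ≠ 0)
    {μ₁ μ₂ : (Fin 3 → ℝ) → ℝ} {x : Fin 3 → ℝ} (hμ₁ : DifferentiableAt ℝ μ₁ x)
    (hμ₂ : DifferentiableAt ℝ μ₂ x) :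
    rotDer₁ (fun y => (I₁ * μ₁ y ^ 2 + I₂ * μ₂ y ^ 2) / (2 * I₁ * I₂) - h) x =
      μ₁ x * rotDer₁ μ₁ x / I₂ + μ₂ x * rotDer₁ μ₂ x / I₁ := by
  simp only [rotDer₁, pd_potential hI₁ hI₂ hμ₁ hμ₂]
  ring

theorem rotDer₂_potential {I₁ I₂ h : ℝ} (hI₁ : I₁ ≠ 0) (hI₂ : I₂ ≠ 0)
    {μ₁ μ₂ : (Fin 3 → ℝ) → ℝ} {x : Fin 3 → ℝ} (hμ₁ : DifferentiableAt ℝ μ₁ x)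
    (hμ₂ : DifferentiableAt ℝ μ₂ x) :
    rotDer₂ (fun y => (I₁ * μ₁ y ^ 2 + I₂ * μ₂ y ^ 2) / (2 * I₁ * I₂) - h) x =
      μ₁ x * rotDer₂ μ₁ x / I₂ + μ₂ x * rotDer₂ μ₂ x / I₁ := by
  simp only [rotDer₂, pd_potential hI₁ hI₂ hμ₁ hμ₂]
  ring

/-- The matrix `A` of the linear system `F' = A F` for `F = (I₁ω₁ − μ₂(γ), I₂ω₂ + μ₁(γ))`,
evaluated at `γ = x`. -/
def relationsCoeff (I₁ I₂ : ℝ) (μ₁ μ₂ : (Fin 3 → ℝ) → ℝ) (x : Fin 3 → ℝ) :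
    ℝ × ℝ →L[ℝ] ℝ × ℝ :=
  (ContinuousLinearMap.fst ℝ ℝ ℝ).smulRight (-rotDer₁ μ₂ x / I₁, rotDer₁ μ₁ x / I₁) +
    (ContinuousLinearMap.snd ℝ ℝ ℝ).smulRight (-rotDer₂ μ₂ x / I₂, rotDer₂ μ₁ x / I₂)

theorem continuous_relationsCoeff {I₁ I₂ : ℝ} {μ₁ μ₂ : (Fin 3 → ℝ) → ℝ}
    (hμ₁ : ContDiff ℝ 1 μ₁) (hμ₂ : ContDiff ℝ 1 μ₂) :
    Continuous (relationsCoeff I₁ I₂ μ₁ μ₂) := by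
  have := continuous_rotDer₁ hμ₁
  have := continuous_rotDer₂ hμ₁
  have := continuous_rotDer₁ hμ₂
  have := continuous_rotDer₂ hμ₂
  refine continuous_clm_apply.2 fun y => ?_
  simp only [relationsCoeff, add_apply, ContinuousLinearMap.smulRight_apply,
    ContinuousLinearMap.coe_fst', ContinuousLinearMap.coe_snd', Prod.smul_mk, smul_eq_mul,
    Prod.mk_add_mk]
  fun_prop

theorem hasDerivAt_relations {I₁ I₂ h : ℝ} (hI₁ : I₁ ≠ 0) (hI₂ : I₂ ≠ 0)
    {μ₁ μ₂ : (Fin 3 → ℝ) → ℝ} {x : Fin 3 → ℝ} (hμ₁ : DifferentiableAt ℝ μ₁ x)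
    (hμ₂ : DifferentiableAt ℝ μ₂ x) (hpde : rotDer₁ μ₁ x + rotDer₂ μ₂ x = 0)
    {ω₁ ω₂ m₁ m₂ : ℝ → ℝ} {t : ℝ}
    (hω₁ : HasDerivAt ω₁
      (rotDer₁ (fun y => (I₁ * μ₁ y ^ 2 + I₂ * μ₂ y ^ 2) / (2 * I₁ * I₂) - h) x / I₁) t)
    (hω₂ : HasDerivAt ω₂
      (rotDer₂ (fun y => (I₁ * μ₁ y ^ 2 + I₂ * μ₂ y ^ 2) / (2 * I₁ * I₂) - h) x / I₂) t)
    (hm₁ : HasDerivAt m₁ (ω₁ t * rotDer₁ μ₁ x + ω₂ t * rotDer₂ μ₁ x) t)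
    (hm₂ : HasDerivAt m₂ (ω₁ t * rotDer₁ μ₂ x + ω₂ t * rotDer₂ μ₂ x) t)
    (hx₁ : m₁ t = μ₁ x) (hx₂ : m₂ t = μ₂ x) :
    HasDerivAt (fun s => (I₁ * ω₁ s - m₂ s, I₂ * ω₂ s + m₁ s))
      (relationsCoeff I₁ I₂ μ₁ μ₂ x (I₁ * ω₁ t - m₂ t, I₂ * ω₂ t + m₁ t)) t := by
  refine (((hω₁.const_mul I₁).sub hm₂).prodMk ((hω₂.const_mul I₂).add hm₁)).congr_deriv ?_
  rw [rotDer₁_potential hI₁ hI₂ hμ₁ hμ₂, rotDer₂_potential hI₁ hI₂ hμ₁ hμ₂]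
  simp only [relationsCoeff, hx₁, hx₂, add_apply, ContinuousLinearMap.smulRight_apply,
    ContinuousLinearMap.coe_fst', ContinuousLinearMap.coe_snd', Prod.smul_mk, smul_eq_mul,
    Prod.mk_add_mk, Prod.mk.injEq]
  constructor
  · field_simp
    linear_combination I₁ * μ₁ x * hpde
  · field_simp
    linear_combination I₂ * μ₂ x * hpde

/-- Suslov problem: with the potential `U = (I₁μ₁² + I₂μ₂²)/(2I₁I₂) − h` built from
solutions μ₁, μ₂ of the PDE (4), the relations `I₁ω₁ − μ₂ = 0`, `I₂ω₂ + μ₁ = 0` are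
invariant relations of the reduced Euler–Poisson equations. -/
theorem suslov_invariant_relations
    (I₁ I₂ h : ℝ) (hI₁ : 0 < I₁) (hI₂ : 0 < I₂)
    (μ₁ μ₂ : (Fin 3 → ℝ) → ℝ)
    (hμ₁ : ContDiff ℝ 1 μ₁) (hμ₂ : ContDiff ℝ 1 μ₂)
    -- the PDE  γ₃(∂_{γ₂}μ₁ − ∂_{γ₁}μ₂) − γ₂ ∂_{γ₃}μ₁ + γ₁ ∂_{γ₃}μ₂ = 0
    (hpde : ∀ γ : Fin 3 → ℝ,
      γ 2 * (pd 1 μ₁ γ - pd 0 μ₂ γ) - γ 1 * pd 2 μ₁ γ + γ 0 * pd 2 μ₂ γ = 0)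
    (U : (Fin 3 → ℝ) → ℝ)
    (hU : ∀ γ, U γ = (I₁ * μ₁ γ ^ 2 + I₂ * μ₂ γ ^ 2) / (2 * I₁ * I₂) - h)
    -- a solution of the Suslov system on an open interval
    (t₁ t₂ : ℝ) (ω₁ ω₂ : ℝ → ℝ) (γ : ℝ → (Fin 3 → ℝ))
    (hω₁ : ∀ t ∈ Ioo t₁ t₂,
      HasDerivAt ω₁ ((γ t 2 * pd 1 U (γ t) - γ t 1 * pd 2 U (γ t)) / I₁) t)
    (hω₂ : ∀ t ∈ Ioo t₁ t₂,
      HasDerivAt ω₂ ((γ t 0 * pd 2 U (γ t) - γ t 2 * pd 0 U (γ t)) / I₂) t)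
    (hγ₁ : ∀ t ∈ Ioo t₁ t₂, HasDerivAt (fun s => γ s 0) (-(γ t 2 * ω₂ t)) t)
    (hγ₂ : ∀ t ∈ Ioo t₁ t₂, HasDerivAt (fun s => γ s 1) (γ t 2 * ω₁ t) t)
    (hγ₃ : ∀ t ∈ Ioo t₁ t₂, HasDerivAt (fun s => γ s 2) (γ t 0 * ω₂ t - γ t 1 * ω₁ t) t)
    -- the relations hold at some instant t₀
    (t₀ : ℝ) (ht₀ : t₀ ∈ Ioo t₁ t₂)
    (h₁ : I₁ * ω₁ t₀ = μ₂ (γ t₀)) (h₂ : I₂ * ω₂ t₀ = -μ₁ (γ t₀)) :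
    ∀ t ∈ Ioo t₁ t₂, I₁ * ω₁ t = μ₂ (γ t) ∧ I₂ * ω₂ t = -μ₁ (γ t) := by
  obtain rfl : U = _ := funext hU
  have hμ₁' := hμ₁.differentiable one_ne_zero
  have hμ₂' := hμ₂.differentiable one_ne_zero
  have hpde' (x : Fin 3 → ℝ) : rotDer₁ μ₁ x + rotDer₂ μ₂ x = 0 := by
    rw [← hpde x, rotDer₁, rotDer₂]
    ring
  have hγ (t : ℝ) (ht : t ∈ Ioo t₁ t₂) :=
    hasDerivAt_pi_three (hγ₁ t ht) (hγ₂ t ht) (hγ₃ t ht)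
  have hm (μ : (Fin 3 → ℝ) → ℝ) (hμ : Differentiable ℝ μ) (t : ℝ) (ht : t ∈ Ioo t₁ t₂) :=
    hasDerivAt_comp_of_poisson (hμ (γ t)) (hγ t ht)
  have hγc : ContinuousOn γ (Ioo t₁ t₂) := fun t ht =>
    (hγ t ht).continuousAt.continuousWithinAt
  have hF := linear_ODE_eqOn_zero_of_mem_Ioo
    ((continuous_relationsCoeff (I₁ := I₁) (I₂ := I₂) hμ₁ hμ₂).comp_continuousOn hγc)
    (fun t ht => hasDerivAt_relations hI₁.ne' hI₂.ne' (hμ₁' _) (hμ₂' _) (hpde' _) (hω₁ t ht)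
      (hω₂ t ht) (hm μ₁ hμ₁' t ht) (hm μ₂ hμ₂' t ht) rfl rfl) ht₀ (by simp [h₁, h₂])
  intro t ht
  simpa [sub_eq_zero, add_eq_zero_iff_eq_neg] using hF ht
end
end

section
/- Let p₁, p₂, p₃ : ℝ³ → ℝ be C¹ functions, let a, b, c : ℝ³ → ℝ be arbitrary functions, and let D : ℝ³ → ℝ be a positive function. Define Λ₁ = (∂₂p₁ − ∂₁p₂) b + (∂₃p₁ − ∂₁p₃) c, Λ₂ = (∂₃p₂ − ∂₂p₃) c + (∂₁p₂ − ∂₂p₁) a, Λ₃ = (∂₂p₃ − ∂₃p₂) b + (∂₁p₃ − ∂₃p₁) a, let ṽ = (a, b, c) and let rot ṽ = (1/√D) (∂₂p₃ − ∂₃p₂, ∂₃p₁ − ∂₁p₃, ∂₁p₂ − ∂₂p₁). Then at every point x ∈ ℝ³: Λ₁(x) = Λ₂(x) = Λ₃(x) = 0 if and only if ṽ(x) × rot ṽ(x) = 0, i.e. ṽ is a Kummer vector field. -/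
open Real Set

noncomputable section

/-!
Up to sign, `(Λ₁, Λ₂, Λ₃)` is the cross product of `ṽ` with the Euclidean curl
`(∂₂p₃ − ∂₃p₂, ∂₃p₁ − ∂₁p₃, ∂₁p₂ − ∂₂p₁)` of the covector `p`, and the metric curl `rot ṽ`
is that vector rescaled by `1/√D ≠ 0`. Scaling commutes with the cross product, so both
conditions say that `ṽ × curl p` vanishes.
-/

def curlVec (p₁ p₂ p₃ : (Fin 3 → ℝ) → ℝ) (x : Fin 3 → ℝ) : Fin 3 → ℝ :=
  ![pd 1 p₃ x - pd 2 p₂ x, pd 2 p₁ x - pd 0 p₃ x, pd 0 p₂ x - pd 1 p₁ x]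

theorem cross_smul_right (u w : Fin 3 → ℝ) (t : ℝ) : cross u (t • w) = t • cross u w := by
  ext i
  fin_cases i <;>
    simp only [cross, Pi.smul_apply, smul_eq_mul, Fin.isValue, Fin.zero_eta, Fin.mk_one,
      Fin.reduceFinMk, Matrix.cons_val, Matrix.cons_val_zero, Matrix.cons_val_one] <;>
    ring

theorem neg_cross_curlVec (p₁ p₂ p₃ : (Fin 3 → ℝ) → ℝ) (x : Fin 3 → ℝ) (a b c : ℝ) :
    -cross ![a, b, c] (curlVec p₁ p₂ p₃ x) =
      ![(pd 1 p₁ x - pd 0 p₂ x) * b + (pd 2 p₁ x - pd 0 p₃ x) * c,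
        (pd 2 p₂ x - pd 1 p₃ x) * c + (pd 0 p₂ x - pd 1 p₁ x) * a,
        (pd 1 p₃ x - pd 2 p₂ x) * b + (pd 0 p₃ x - pd 2 p₁ x) * a] := by
  ext i
  fin_cases i <;>
    simp only [cross, curlVec, Pi.neg_apply, neg_sub, Fin.isValue, Fin.zero_eta, Fin.mk_one,
      Fin.reduceFinMk, Matrix.cons_val, Matrix.cons_val_zero, Matrix.cons_val_one] <;>
    ring

theorem rattleback_kummer_general
    (p₁ p₂ p₃ : (Fin 3 → ℝ) → ℝ)
    (a b c : (Fin 3 → ℝ) → ℝ)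
    (D : (Fin 3 → ℝ) → ℝ) (hD : ∀ x, 0 < D x)
    (Λ₁ Λ₂ Λ₃ : (Fin 3 → ℝ) → ℝ)
    (hΛ₁ : ∀ x, Λ₁ x = (pd 1 p₁ x - pd 0 p₂ x) * b x + (pd 2 p₁ x - pd 0 p₃ x) * c x)
    (hΛ₂ : ∀ x, Λ₂ x = (pd 2 p₂ x - pd 1 p₃ x) * c x + (pd 0 p₂ x - pd 1 p₁ x) * a x)
    (hΛ₃ : ∀ x, Λ₃ x = (pd 1 p₃ x - pd 2 p₂ x) * b x + (pd 0 p₃ x - pd 2 p₁ x) * a x)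
    (vt : (Fin 3 → ℝ) → (Fin 3 → ℝ)) (hvt : ∀ x, vt x = ![a x, b x, c x])
    (rotvt : (Fin 3 → ℝ) → (Fin 3 → ℝ))
    (hrot : ∀ x, rotvt x = (1 / Real.sqrt (D x)) •
      ![pd 1 p₃ x - pd 2 p₂ x, pd 2 p₁ x - pd 0 p₃ x, pd 0 p₂ x - pd 1 p₁ x]) :
    ∀ x, (Λ₁ x = 0 ∧ Λ₂ x = 0 ∧ Λ₃ x = 0) ↔ cross (vt x) (rotvt x) = 0 := by
  intro x
  have hΛ : ![Λ₁ x, Λ₂ x, Λ₃ x] = -cross ![a x, b x, c x] (curlVec p₁ p₂ p₃ x) := by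
    rw [neg_cross_curlVec, hΛ₁, hΛ₂, hΛ₃]
  have hrot' : rotvt x = (1 / √(D x)) • curlVec p₁ p₂ p₃ x := hrot x
  have hscale : 1 / √(D x) ≠ 0 := one_div_ne_zero (sqrt_pos.2 (hD x)).ne'
  calc (Λ₁ x = 0 ∧ Λ₂ x = 0 ∧ Λ₃ x = 0) ↔ ![Λ₁ x, Λ₂ x, Λ₃ x] = 0 := by simp
    _ ↔ cross ![a x, b x, c x] (curlVec p₁ p₂ p₃ x) = 0 := by rw [hΛ, neg_eq_zero]
    _ ↔ cross (vt x) (rotvt x) = 0 := by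
      rw [hvt, hrot', cross_smul_right, smul_eq_zero_iff_right hscale]

/-- Rattleback proposition: the conditions `Λ₁ = Λ₂ = Λ₃ = 0` hold at a point iff the
reduced Cartesian field `ṽ = (a,b,c)` is parallel to its metric curl there, i.e. `ṽ` is
a Kummer vector field. -/
theorem rattleback_kummer
    (p₁ p₂ p₃ : (Fin 3 → ℝ) → ℝ)
    (hp₁ : ContDiff ℝ 1 p₁) (hp₂ : ContDiff ℝ 1 p₂) (hp₃ : ContDiff ℝ 1 p₃)
    (a b c : (Fin 3 → ℝ) → ℝ)
    (D : (Fin 3 → ℝ) → ℝ) (hD : ∀ x, 0 < D x)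
    (Λ₁ Λ₂ Λ₃ : (Fin 3 → ℝ) → ℝ)
    (hΛ₁ : ∀ x, Λ₁ x = (pd 1 p₁ x - pd 0 p₂ x) * b x + (pd 2 p₁ x - pd 0 p₃ x) * c x)
    (hΛ₂ : ∀ x, Λ₂ x = (pd 2 p₂ x - pd 1 p₃ x) * c x + (pd 0 p₂ x - pd 1 p₁ x) * a x)
    (hΛ₃ : ∀ x, Λ₃ x = (pd 1 p₃ x - pd 2 p₂ x) * b x + (pd 0 p₃ x - pd 2 p₁ x) * a x)
    (vt : (Fin 3 → ℝ) → (Fin 3 → ℝ)) (hvt : ∀ x, vt x = ![a x, b x, c x])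
    (rotvt : (Fin 3 → ℝ) → (Fin 3 → ℝ))
    (hrot : ∀ x, rotvt x = (1 / Real.sqrt (D x)) •
      ![pd 1 p₃ x - pd 2 p₂ x, pd 2 p₁ x - pd 0 p₃ x, pd 0 p₂ x - pd 1 p₁ x]) :
    ∀ x, (Λ₁ x = 0 ∧ Λ₂ x = 0 ∧ Λ₃ x = 0) ↔ cross (vt x) (rotvt x) = 0 :=
  rattleback_kummer_general p₁ p₂ p₃ a b c D hD Λ₁ Λ₂ Λ₃ hΛ₁ hΛ₂ hΛ₃ vt hvt rotvt hrot
end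
end
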